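/- Let A be a 2n×2n real symmetric matrix, φ(y) = yᵗAy, and μ_A(E) = ∫_{ℝ^{2n}} χ_E(y, φ(y)) dy. Let 1 ≤ p, q < ∞. If there is a constant c > 0 with ‖f ∗ μ_A‖_{L^q(ℍⁿ)} ≤ c ‖f‖_{L^p(ℍⁿ)} for all f ∈ L^p(ℍⁿ), then 1/q = 1/p − 2n/(2n+2). -/

import Mathlib

open MeasureTheory Matrix Real ENNReal

noncomputable section

abbrev Hidx (n : ℕ) := Fin n ⊕ Fin n
abbrev Hgrp (n : ℕ) := (Hidx n → ℝ) × ℝ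

/-- The `2n × 2n` skew-symmetric matrix `J = [[0, Iₙ], [-Iₙ, 0]]`. -/
def Jmat (n : ℕ) : Matrix (Hidx n) (Hidx n) ℝ := Matrix.fromBlocks 0 1 (-1) 0

/-- Heisenberg multiplication `(x,t)·(y,s) = (x+y, t+s+xᵗJy)`. -/
def heisMul {n : ℕ} (p q : Hgrp n) : Hgrp n :=
  (p.1 + q.1, p.2 + q.2 + p.1 ⬝ᵥ (Jmat n *ᵥ q.1))

/-- Heisenberg inversion `(x,t)⁻¹ = (−x,−t)`. -/
def heisInv {n : ℕ} (p : Hgrp n) : Hgrp n := (-p.1, -p.2)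

/-- The quadratic form `φ(y) = yᵗAy`. -/
def qform {n : ℕ} (A : Matrix (Hidx n) (Hidx n) ℝ) (y : Hidx n → ℝ) : ℝ := y ⬝ᵥ (A *ᵥ y)

/-- The Euclidean norm on `ℝ^{2n}`. -/
def enorm2n {n : ℕ} (y : Hidx n → ℝ) : ℝ := Real.sqrt (∑ i, y i ^ 2)

/-- Convolution on the right by a Borel measure on the Heisenberg group:
`(f ∗ μ)(x,t) = ∫ f((x,t)·(y,s)⁻¹) dμ(y,s)`. -/
def heisConv {n : ℕ} (f : Hgrp n → ℝ) (μ : Measure (Hgrp n)) (p : Hgrp n) : ℝ :=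
  ∫ q, f (heisMul p (heisInv q)) ∂μ

/-- The measure `ν_γ(E) = ∫_{ℝ^{2n}} χ_E(y, φ(y)) η(y) |y|^{−γ} dy` on `ℍⁿ`. -/
def nuGamma {n : ℕ} (A : Matrix (Hidx n) (Hidx n) ℝ) (η : (Hidx n → ℝ) → ℝ) (γ : ℝ) :
    Measure (Hgrp n) :=
  Measure.map (fun y => (y, qform A y))
    (volume.withDensity (fun y => ENNReal.ofReal (η y * enorm2n y ^ (-γ))))

/-- The measure `μ_A(E) = ∫_{ℝ^{2n}} χ_E(y, φ(y)) dy` on `ℍⁿ`. -/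
def muA {n : ℕ} (A : Matrix (Hidx n) (Hidx n) ℝ) : Measure (Hgrp n) :=
  Measure.map (fun y => (y, qform A y)) volume

/-!
The dilations `δₗ(x, t) = (l x, l² t)` are automorphisms of `ℍⁿ` that scale Haar measure by
`l^(2n+2)`, and, `φ` being 2-homogeneous, they scale `μ_A` by `l^(2n)`. Hence
`(f ∘ δₗ) ∗ μ_A = l^(-2n) (f ∗ μ_A) ∘ δₗ`, and the bound applied to `f ∘ δₗ`, with `f` the
indicator of a ball, gives `l^(-2n-(2n+2)/q) ‖f ∗ μ_A‖_q ≤ c l^(-(2n+2)/p) ‖f‖_p` for all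
`l > 0`. Since `f ∗ μ_A` is bounded below on an open set, `‖f ∗ μ_A‖_q > 0`, and letting
`l → 0` or `l → ∞` forces the two exponents to agree.
-/
lemma eq_of_forall_rpow_mul_le {α β a C : ℝ} (ha : 0 < a)
    (h : ∀ l : ℝ, 0 < l → l ^ α * a ≤ C * l ^ β) : α = β := by
  by_contra hne
  have hd : α - β ≠ 0 := sub_ne_zero.2 hne
  have hC : 0 < C := by simpa using ha.trans_le (by simpa using h 1 one_pos)
  have hbound (l : ℝ) (hl : 0 < l) : l ^ (α - β) * a ≤ C := by
    have := h l hl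
    rw [show α = (α - β) + β by ring, Real.rpow_add hl] at this
    nlinarith [Real.rpow_pos_of_pos hl β]
  -- test the bound at the `l` with `l ^ (α - β) = 2 C / a`
  have hX : 0 < 2 * C / a := by positivity
  have := hbound _ (Real.rpow_pos_of_pos hX (α - β)⁻¹)
  rw [← Real.rpow_mul hX.le, inv_mul_cancel₀ hd, Real.rpow_one, div_mul_cancel₀ _ ha.ne'] at this
  linarith

lemma eq_of_forall_ofReal_rpow_mul_le {α β : ℝ} {a b C : ℝ≥0∞} (ha : a ≠ 0) (hb : b ≠ ∞)
    (hC : C ≠ ∞)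
    (h : ∀ l : ℝ, 0 < l → ENNReal.ofReal (l ^ α) * a ≤ C * (ENNReal.ofReal (l ^ β) * b)) :
    α = β := by
  have hRHS (l : ℝ) : C * (ENNReal.ofReal (l ^ β) * b) ≠ ∞ := by finiteness
  have ha_top : a ≠ ∞ := ne_top_of_le_ne_top (hRHS 1) (by simpa using h 1 one_pos)
  refine eq_of_forall_rpow_mul_le (a := a.toReal) (C := C.toReal * b.toReal)
    (ENNReal.toReal_pos ha ha_top) fun l hl => ?_
  have := ENNReal.toReal_mono (hRHS l) (h l hl)
  simp only [ENNReal.toReal_mul, ENNReal.toReal_ofReal (Real.rpow_nonneg hl.le _)] at this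
  linarith

lemma eLpNorm_ne_zero_of_forall_le {α : Type*} [MeasurableSpace α] {μ : Measure α} {g : α → ℝ}
    {U : Set α} (hU : MeasurableSet U) (hμU : μ U ≠ 0) {ε : ℝ} (hε : 0 < ε)
    (hg : ∀ x ∈ U, ε ≤ g x) {r : ℝ≥0∞} (hr : r ≠ 0) : eLpNorm g r μ ≠ 0 := by
  have hle : eLpNorm (U.indicator fun _ => ε) r μ ≤ eLpNorm g r μ := by
    refine eLpNorm_mono fun x => ?_
    by_cases hx : x ∈ U
    · simpa [hx, abs_of_pos hε] using (hg x hx).trans (le_abs_self _)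
    · simp [hx]
  refine (lt_of_lt_of_le ?_ hle).ne'
  rw [eLpNorm_indicator_const' hU hμU hr]
  exact ENNReal.mul_pos (by simpa using hε.ne')
    (ENNReal.rpow_pos_of_nonneg (pos_iff_ne_zero.2 hμU) (by positivity)).ne'

lemma measurableEmbedding_graph {α : Type*} [MeasurableSpace α] {f : α → ℝ} (hf : Measurable f) :
    MeasurableEmbedding fun x => (x, f x) := by
  refine .of_measurable_inverse (measurable_id.prodMk hf) ?_ measurable_fst fun _ => rfl
  convert measurableSet_graph hf
  ext ⟨x, t⟩
  simp [eq_comm]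

def heisDil (n : ℕ) (l : ℝ) : Hgrp n → Hgrp n := Prod.map (l • ·) (l ^ 2 • ·)

section Dilation

variable {n : ℕ}

lemma qform_smul (A : Matrix (Hidx n) (Hidx n) ℝ) (l : ℝ) (y : Hidx n → ℝ) :
    qform A (l • y) = l ^ 2 * qform A y := by
  simp only [qform, mulVec_smul, smul_dotProduct, dotProduct_smul, smul_eq_mul]
  ring

lemma heisDil_heisMul (l : ℝ) (p q : Hgrp n) :
    heisDil n l (heisMul p q) = heisMul (heisDil n l p) (heisDil n l q) := by
  simp only [heisDil, heisMul, Prod.map, smul_add, mulVec_smul, smul_dotProduct,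
    dotProduct_smul, smul_eq_mul]
  ext <;> ring

lemma heisDil_heisInv (l : ℝ) (p : Hgrp n) : heisDil n l (heisInv p) = heisInv (heisDil n l p) := by
  simp [heisDil, heisInv, Prod.map]

lemma heisDil_graph_qform (A : Matrix (Hidx n) (Hidx n) ℝ) (l : ℝ) (y : Hidx n → ℝ) :
    heisDil n l (y, qform A y) = (l • y, qform A (l • y)) := by
  simp [heisDil, qform_smul]

lemma measurableEmbedding_heisDil {l : ℝ} (hl : l ≠ 0) : MeasurableEmbedding (heisDil n l) :=
  (measurableEmbedding_const_smul₀ hl).prodMap (measurableEmbedding_const_smul₀ (pow_ne_zero 2 hl))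

lemma map_heisDil_volume {l : ℝ} (hl : 0 < l) :
    Measure.map (heisDil n l) volume = ENNReal.ofReal (l ^ (2 * n + 2))⁻¹ • volume := by
  have hfin : Module.finrank ℝ (Hidx n → ℝ) = 2 * n := by simp [two_mul]
  rw [Measure.volume_eq_prod, heisDil, ← Measure.map_prod_map _ _ (measurable_const_smul l)
    (measurable_const_smul _), Measure.map_addHaar_smul _ hl.ne',
    Measure.map_addHaar_smul _ (pow_ne_zero 2 hl.ne'), Measure.prod_smul_left,
    Measure.prod_smul_right, smul_smul, ← ENNReal.ofReal_mul (by positivity), hfin,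
    Module.finrank_self, pow_one, abs_of_pos (by positivity), abs_of_pos (by positivity),
    ← mul_inv, ← pow_add, mul_comm]

lemma eLpNorm_comp_heisDil (g : Hgrp n → ℝ) {l q : ℝ} (hl : 0 < l) (hq : 0 < q) :
    eLpNorm (g ∘ heisDil n l) (ENNReal.ofReal q) volume
      = ENNReal.ofReal (l ^ (-(2 * n + 2) / q)) * eLpNorm g (ENNReal.ofReal q) volume := by
  rw [← (measurableEmbedding_heisDil hl.ne').eLpNorm_map_measure, map_heisDil_volume hl,
    eLpNorm_smul_measure_of_ne_top ENNReal.ofReal_ne_top, smul_eq_mul,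
    ENNReal.ofReal_rpow_of_nonneg (by positivity) (by positivity), one_div,
    ENNReal.toReal_inv, ENNReal.toReal_ofReal hq.le, ← Real.rpow_natCast,
    ← Real.rpow_neg hl.le, ← Real.rpow_mul hl.le]
  push_cast
  ring_nf

lemma MeasureTheory.MemLp.comp_heisDil {g : Hgrp n → ℝ} {r : ℝ≥0∞} {l : ℝ} (hg : MemLp g r volume)
    (hl : 0 < l) : MemLp (g ∘ heisDil n l) r volume := by
  rw [← (measurableEmbedding_heisDil hl.ne').memLp_map_measure_iff, map_heisDil_volume hl]
  exact hg.smul_measure ENNReal.ofReal_ne_top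

end Dilation

section Convolution

variable {n : ℕ}

lemma continuous_qform (A : Matrix (Hidx n) (Hidx n) ℝ) : Continuous (qform A) :=
  continuous_id.dotProduct (continuous_const.matrix_mulVec continuous_id)

lemma integral_muA {E : Type*} [NormedAddCommGroup E] [NormedSpace ℝ E]
    (A : Matrix (Hidx n) (Hidx n) ℝ) (g : Hgrp n → E) :
    ∫ z, g z ∂muA A = ∫ y, g (y, qform A y) :=
  (measurableEmbedding_graph (continuous_qform A).measurable).integral_map g

lemma heisConv_muA_comp_heisDil (A : Matrix (Hidx n) (Hidx n) ℝ) (f : Hgrp n → ℝ) {l : ℝ}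
    (hl : 0 < l) :
    heisConv (f ∘ heisDil n l) (muA A) = (l ^ (2 * n))⁻¹ • (heisConv f (muA A) ∘ heisDil n l) := by
  have hfin : Module.finrank ℝ (Hidx n → ℝ) = 2 * n := by simp [two_mul]
  ext p
  simp only [heisConv, integral_muA, Function.comp_apply, heisDil_heisMul, heisDil_heisInv,
    heisDil_graph_qform, Pi.smul_apply, smul_eq_mul]
  rw [Measure.integral_comp_smul volume
      (fun y => f (heisMul (heisDil n l p) (heisInv (y, qform A y)))), hfin, abs_of_pos (by positivity), smul_eq_mul]

lemma eLpNorm_heisConv_muA_comp_heisDil (A : Matrix (Hidx n) (Hidx n) ℝ) (f : Hgrp n → ℝ)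
    {l q : ℝ} (hl : 0 < l) (hq : 0 < q) :
    eLpNorm (heisConv (f ∘ heisDil n l) (muA A)) (ENNReal.ofReal q) volume
      = ENNReal.ofReal (l ^ (-(2 * n) - (2 * n + 2) / q))
          * eLpNorm (heisConv f (muA A)) (ENNReal.ofReal q) volume := by
  rw [heisConv_muA_comp_heisDil A f hl, eLpNorm_const_smul, eLpNorm_comp_heisDil _ hl hq,
    ← mul_assoc, Real.enorm_eq_ofReal (by positivity), ← ENNReal.ofReal_mul (by positivity),
    sub_eq_add_neg, neg_div, Real.rpow_add hl, Real.rpow_neg hl.le, Real.rpow_neg hl.le]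
  norm_cast

lemma continuous_heisMul : Continuous fun z : Hgrp n × Hgrp n => heisMul z.1 z.2 := by
  unfold heisMul
  fun_prop

lemma continuous_heisInv : Continuous (heisInv : Hgrp n → Hgrp n) := by
  unfold heisInv
  fun_prop

lemma continuous_heisMul_heisInv_graph_qform (A : Matrix (Hidx n) (Hidx n) ℝ) :
    Continuous fun z : Hgrp n × (Hidx n → ℝ) => heisMul z.1 (heisInv (z.2, qform A z.2)) :=
  continuous_heisMul.comp (continuous_fst.prodMk
    (continuous_heisInv.comp (continuous_snd.prodMk ((continuous_qform A).comp continuous_snd))))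

lemma heisConv_muA_indicator (A : Matrix (Hidx n) (Hidx n) ℝ) {S : Set (Hgrp n)}
    (hS : MeasurableSet S) (p : Hgrp n) :
    heisConv (S.indicator 1) (muA A) p
      = volume.real {y | heisMul p (heisInv (y, qform A y)) ∈ S} := by
  have hcont := (continuous_heisMul_heisInv_graph_qform A).comp (Continuous.prodMk_right p)
  rw [heisConv, integral_muA]
  exact integral_indicator_one (hcont.measurable hS)

lemma exists_isOpen_forall_le_heisConv_muA_indicator_ball (A : Matrix (Hidx n) (Hidx n) ℝ) :
    ∃ U : Set (Hgrp n), IsOpen U ∧ U.Nonempty ∧ ∃ ε > 0,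
      ∀ p ∈ U, ε ≤ heisConv ((Metric.ball 0 1).indicator 1) (muA A) p := by
  let slice : Hgrp n → Set (Hidx n → ℝ) :=
    fun p => {y | heisMul p (heisInv (y, qform A y)) ∈ Metric.ball 0 1}
  have hslice_fin (p : Hgrp n) : volume (slice p) < ∞ := by
    refine (measure_mono fun y hy => ?_).trans_lt (measure_ball_lt_top (x := p.1) (r := 1))
    have := (norm_fst_le _).trans_lt (mem_ball_zero_iff.1 hy)
    simpa [heisMul, heisInv, dist_eq_norm, ← sub_eq_add_neg, norm_sub_rev] using this
  have hopen : IsOpen {z : Hgrp n × (Hidx n → ℝ) | z.2 ∈ slice z.1} :=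
    Metric.isOpen_ball.preimage (continuous_heisMul_heisInv_graph_qform A)
  have h0 : ((0 : Hgrp n), (0 : Hidx n → ℝ)) ∈ {z | z.2 ∈ slice z.1} := by
    simp [slice, heisMul, heisInv, qform]
  obtain ⟨U, V, hU, h0U, hV, h0V, hUV⟩ := mem_nhds_prod_iff'.1 (hopen.mem_nhds h0)
  have hV_slice (p : Hgrp n) (hp : p ∈ U) : V ⊆ slice p := fun y hy => hUV (Set.mk_mem_prod hp hy)
  refine ⟨U, hU, ⟨0, h0U⟩, volume.real V, ?_, fun p hp => ?_⟩
  · exact ENNReal.toReal_pos (hV.measure_ne_zero _ ⟨0, h0V⟩)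
      ((measure_mono (hV_slice 0 h0U)).trans_lt (hslice_fin 0)).ne
  · rw [heisConv_muA_indicator A measurableSet_ball]
    exact measureReal_mono (hV_slice p hp) (hslice_fin p).ne

end Convolution

theorem muA_bounded_necessary_general (n : ℕ) (A : Matrix (Hidx n) (Hidx n) ℝ)
    (p q : ℝ) (hp : 1 ≤ p) (hq : 1 ≤ q)
    (hbdd : ∃ c : ℝ, 0 < c ∧ ∀ f : Hgrp n → ℝ,
      MemLp f (ENNReal.ofReal p) volume →
        eLpNorm (heisConv f (muA A)) (ENNReal.ofReal q) volume ≤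
          ENNReal.ofReal c * eLpNorm f (ENNReal.ofReal p) volume) :
    1 / q = 1 / p - 2 * n / (2 * n + 2) := by
  obtain ⟨c, -, hc⟩ := hbdd
  have hp0 : 0 < p := by linarith
  have hq0 : 0 < q := by linarith
  set f₀ : Hgrp n → ℝ := (Metric.ball 0 1).indicator 1
  have hf₀ : MemLp f₀ (ENNReal.ofReal p) volume :=
    memLp_indicator_const _ measurableSet_ball 1 (Or.inr measure_ball_lt_top.ne)
  have hconv_ne_zero : eLpNorm (heisConv f₀ (muA A)) (ENNReal.ofReal q) volume ≠ 0 := by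
    obtain ⟨U, hU, hUne, ε, hε, hle⟩ := exists_isOpen_forall_le_heisConv_muA_indicator_ball A
    exact eLpNorm_ne_zero_of_forall_le hU.measurableSet (hU.measure_ne_zero _ hUne) hε hle
      (by simpa using hq0)
  have hexp := eq_of_forall_ofReal_rpow_mul_le hconv_ne_zero hf₀.eLpNorm_ne_top
    ENNReal.ofReal_ne_top fun l hl => by
      simpa only [eLpNorm_heisConv_muA_comp_heisDil A f₀ hl hq0, eLpNorm_comp_heisDil f₀ hl hp0]
        using hc _ (hf₀.comp_heisDil hl)
  field_simp at hexp ⊢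
  linarith

/-- Let `1 ≤ p, q < ∞`.  If `‖f ∗ μ_A‖_{L^q(ℍⁿ)} ≤ c ‖f‖_{L^p(ℍⁿ)}` for all
`f ∈ L^p(ℍⁿ)` and some constant `c > 0`, then `1/q = 1/p − 2n/(2n+2)`. -/
theorem muA_bounded_necessary (n : ℕ) (A : Matrix (Hidx n) (Hidx n) ℝ) (hA : A.IsSymm)
    (p q : ℝ) (hp : 1 ≤ p) (hq : 1 ≤ q)
    (hbdd : ∃ c : ℝ, 0 < c ∧ ∀ f : Hgrp n → ℝ,
      MemLp f (ENNReal.ofReal p) volume →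
        eLpNorm (heisConv f (muA A)) (ENNReal.ofReal q) volume ≤
          ENNReal.ofReal c * eLpNorm f (ENNReal.ofReal p) volume) :
    1 / q = 1 / p - 2 * n / (2 * n + 2) :=
  muA_bounded_necessary_general n A p q hp hq hbdd

end
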